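/- Let P ⊆ ℝ^d be a full-dimensional lattice polytope with codegree a satisfying P = ⌊aP⌋ + {P}. Then aP = ⌊aP⌋ + {aP}, and moreover {aP} = (a−1)P + {P}. (Here {aP} denotes the remainder polytope of the lattice polytope aP, whose codegree is 1, so {aP} = conv({x ∈ ℤ^d : n_F(x) ≥ −1 for all facets F of P}).) -/

import Mathlib

open Set Pointwise

/-- The set of lattice points of `ℝ^d`. -/
def latticePoints (d : ℕ) : Set (Fin d → ℝ) :=
  {x | ∀ i, ∃ z : ℤ, x i = (z : ℝ)}

/-- A lattice polytope: the convex hull of a finite set of lattice points. -/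
def IsLatticePolytope {d : ℕ} (P : Set (Fin d → ℝ)) : Prop :=
  ∃ V : Finset (Fin d → ℝ), (V : Set (Fin d → ℝ)) ⊆ latticePoints d ∧
    P = convexHull ℝ (V : Set (Fin d → ℝ))

/-- The natural pairing of an integral linear functional with a point of `ℝ^d`. -/
def pairing {d : ℕ} (n : Fin d → ℤ) (x : Fin d → ℝ) : ℝ :=
  ∑ i, (n i : ℝ) * x i

/-- `P = {x | n_F(x) ≥ -h_F}` is an irredundant presentation with primitive
integral inner normals, i.e. the facet presentation of `P`. -/
def IsFacetPresentation {d m : ℕ} (P : Set (Fin d → ℝ))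
    (n : Fin m → Fin d → ℤ) (h : Fin m → ℤ) : Prop :=
  P = {x | ∀ i, pairing (n i) x ≥ -(h i : ℝ)} ∧
  (∀ i, Finset.univ.gcd (n i) = 1) ∧
  (∀ i, ∃ x : Fin d → ℝ, pairing (n i) x < -(h i : ℝ) ∧
    ∀ j, j ≠ i → pairing (n j) x ≥ -(h j : ℝ))

/-- `a` is the codegree of `P`: the least `k ≥ 1` such that `int(kP)` contains
a lattice point. -/
def IsCodegree {d : ℕ} (P : Set (Fin d → ℝ)) (a : ℕ) : Prop :=
  1 ≤ a ∧ (interior ((a : ℝ) • P) ∩ latticePoints d).Nonempty ∧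
    ∀ k : ℕ, 1 ≤ k → (interior ((k : ℝ) • P) ∩ latticePoints d).Nonempty → a ≤ k

/-- The floor polytope `⌊R⌋ = conv(int(R) ∩ ℤ^d)`. -/
def floorPoly {d : ℕ} (R : Set (Fin d → ℝ)) : Set (Fin d → ℝ) :=
  convexHull ℝ (interior R ∩ latticePoints d)

/-- The remainder polytope `{P} = conv{x ∈ ℤ^d | n_F(x) ≥ (a-1)h_F - 1}`,
defined in terms of the facet presentation data and the codegree `a`. -/
def remPoly {d m : ℕ} (n : Fin m → Fin d → ℤ) (h : Fin m → ℤ) (a : ℕ) :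
    Set (Fin d → ℝ) :=
  convexHull ℝ {x | x ∈ latticePoints d ∧
    ∀ i, pairing (n i) x ≥ ((a : ℝ) - 1) * (h i : ℝ) - 1}

/-- The cone `C_P ⊆ ℝ^d × ℝ` over `P`, in terms of the facet presentation. -/
def coneOver {d m : ℕ} (n : Fin m → Fin d → ℤ) (h : Fin m → ℤ) :
    Set ((Fin d → ℝ) × ℝ) :=
  {p | ∀ i, pairing (n i) p.1 ≥ -(p.2 * (h i : ℝ))}

/-- The interior `int(C_P)` of the cone over `P`. -/
def intCone {d m : ℕ} (n : Fin m → Fin d → ℤ) (h : Fin m → ℤ) :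
    Set ((Fin d → ℝ) × ℝ) :=
  {p | ∀ i, pairing (n i) p.1 > -(p.2 * (h i : ℝ))}

/-- The anticanonical set `ant(C_P)` of the cone over `P`. -/
def antCone {d m : ℕ} (n : Fin m → Fin d → ℤ) (h : Fin m → ℤ) :
    Set ((Fin d → ℝ) × ℝ) :=
  {p | ∀ i, pairing (n i) p.1 ≥ -(p.2 * (h i : ℝ)) - 1}

/-- Lattice points of `ℝ^d × ℝ = ℝ^{d+1}`. -/
def latticePairs (d : ℕ) : Set ((Fin d → ℝ) × ℝ) :=
  {p | p.1 ∈ latticePoints d ∧ ∃ z : ℤ, p.2 = (z : ℝ)}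

/-- The nearly Gorenstein condition with respect to a given facet presentation:
`(C_P ∩ ℤ^{d+1}) \ {0} ⊆ (int(C_P) ∩ ℤ^{d+1}) + (ant(C_P) ∩ ℤ^{d+1})`. -/
def NGIncl {d m : ℕ} (n : Fin m → Fin d → ℤ) (h : Fin m → ℤ) : Prop :=
  (coneOver n h ∩ latticePairs d) \ {(0 : (Fin d → ℝ) × ℝ)} ⊆
    (intCone n h ∩ latticePairs d) + (antCone n h ∩ latticePairs d)

/-- A full-dimensional lattice polytope is nearly Gorenstein if the nearly
Gorenstein inclusion holds for its facet presentation. -/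
def NearlyGorenstein {d : ℕ} (P : Set (Fin d → ℝ)) : Prop :=
  ∃ (m : ℕ) (n : Fin m → Fin d → ℤ) (h : Fin m → ℤ),
    IsFacetPresentation P n h ∧ NGIncl n h

/-- The polar dual `Q* = {y | y(x) ≥ -1 for all x ∈ Q}`. -/
def polarDual {d : ℕ} (Q : Set (Fin d → ℝ)) : Set (Fin d → ℝ) :=
  {y | ∀ x ∈ Q, (∑ i, y i * x i) ≥ -1}

/-- A reflexive polytope: a lattice polytope with `0` in its interior whose
polar dual is again a lattice polytope. -/
def IsReflexive {d : ℕ} (Q : Set (Fin d → ℝ)) : Prop :=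
  IsLatticePolytope Q ∧ (0 : Fin d → ℝ) ∈ interior Q ∧
    IsLatticePolytope (polarDual Q)

/-- A Gorenstein polytope: some dilate `kP`, translated by a lattice vector,
is reflexive. -/
def IsGorenstein {d : ℕ} (P : Set (Fin d → ℝ)) : Prop :=
  ∃ (k : ℕ) (w : Fin d → ℝ), 1 ≤ k ∧ w ∈ latticePoints d ∧
    IsReflexive ((fun x => x - w) '' ((k : ℝ) • P))

/-- The integer decomposition property. -/
def IsIDP {d : ℕ} (P : Set (Fin d → ℝ)) : Prop :=
  ∀ k : ℕ, 1 ≤ k → ∀ x ∈ ((k : ℝ) • P) ∩ latticePoints d,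
    ∃ y : Fin k → Fin d → ℝ, (∀ j, y j ∈ P ∩ latticePoints d) ∧ x = ∑ j, y j

/-- Minkowski indecomposability of a lattice polytope. -/
def IsIndecomposable {d : ℕ} (P : Set (Fin d → ℝ)) : Prop :=
  (¬ ∃ p : Fin d → ℝ, P = {p}) ∧
  ∀ P₁ P₂ : Set (Fin d → ℝ), IsLatticePolytope P₁ → IsLatticePolytope P₂ →
    P = P₁ + P₂ → (∃ p, P₁ = {p}) ∨ (∃ p, P₂ = {p})

/-- A `(0,1)`-polytope: the convex hull of a set of `(0,1)`-vectors. -/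
def Is01Polytope {d : ℕ} (P : Set (Fin d → ℝ)) : Prop :=
  ∃ V : Finset (Fin d → ℝ), (∀ v ∈ V, ∀ i, v i = 0 ∨ v i = 1) ∧
    P = convexHull ℝ (V : Set (Fin d → ℝ))

/-!
Since `P` is convex, `aP = (a-1)P + P = ⌊aP⌋ + ((a-1)P + {P})`. The facet inequalities give
`(a-1)P + {P} ⊆ {aP}` directly, and `⌊aP⌋ + {aP} ⊆ aP` because a lattice point in `int(aP)`
satisfies `n_F ≥ -a h_F + 1`. Hence `aP = ⌊aP⌋ + {aP} = ⌊aP⌋ + ((a-1)P + {P})`, and Rådström's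
cancellation law, applied to the closed convex set `(a-1)P + {P}` and the bounded nonempty
`⌊aP⌋`, gives `{aP} = (a-1)P + {P}`.
-/

section RadstromCancellation

variable {E : Type*} [NormedAddCommGroup E] [NormedSpace ℝ E] {A B C : Set E}

lemma Convex.natCast_add_one_smul_add_subset (hA : Convex ℝ A) (hB : Convex ℝ B)
    (h : A + C ⊆ B + C) (k : ℕ) : ((k : ℝ) + 1) • A + C ⊆ ((k : ℝ) + 1) • B + C := by
  induction k with
  | zero => simpa using h
  | succ k ih =>
    push_cast
    rw [hA.add_smul (by positivity) zero_le_one, hB.add_smul (by positivity) zero_le_one,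
      one_smul, one_smul, add_assoc, add_assoc]
    calc ((k : ℝ) + 1) • A + (A + C) ⊆ ((k : ℝ) + 1) • A + (B + C) := add_subset_add_left h
      _ = B + (((k : ℝ) + 1) • A + C) := by rw [add_left_comm]
      _ ⊆ B + (((k : ℝ) + 1) • B + C) := add_subset_add_left ih
      _ = ((k : ℝ) + 1) • B + (B + C) := add_left_comm _ _ _

/-- Rådström's cancellation law. -/
theorem Convex.subset_of_add_subset_add_right (hB : Convex ℝ B) (hBc : IsClosed B)
    (hC : C.Nonempty) (hCb : Bornology.IsBounded C) (h : A + C ⊆ B + C) : A ⊆ B := by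
  intro x hx
  obtain ⟨c₀, hc₀⟩ := hC
  obtain ⟨M, hM⟩ := isBounded_iff_forall_norm_le.mp hCb
  have hx' : {x} + C ⊆ B + C := (add_subset_add_right (singleton_subset_iff.2 hx)).trans h
  rw [← hBc.closure_eq, Metric.mem_closure_iff]
  intro ε hε
  obtain ⟨k, hk⟩ := exists_nat_gt (2 * M / ε)
  set t : ℝ := (k : ℝ) + 1
  have ht : 0 < t := by positivity
  -- `t • x + c₀ = t • b + c` forces `‖x - b‖ = ‖c - c₀‖ / t ≤ 2 M / t`.
  obtain ⟨_, ⟨b, hb, rfl⟩, c, hc, hsum⟩ :=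
    (convex_singleton x).natCast_add_one_smul_add_subset hB hx' k
      (add_mem_add (smul_mem_smul_set rfl) hc₀)
  refine ⟨b, hb, ?_⟩
  have hxb : x - b = t⁻¹ • (c - c₀) := by
    have hsum : t • b + c = t • x + c₀ := hsum
    rw [eq_inv_smul_iff₀ ht.ne', smul_sub, sub_eq_sub_iff_add_eq_add, ← hsum, add_comm]
  have hc_sub : ‖c - c₀‖ ≤ 2 * M := by
    linarith [norm_sub_le c c₀, hM c hc, hM c₀ hc₀]
  rw [dist_eq_norm, hxb, norm_smul, Real.norm_of_nonneg (inv_nonneg.2 ht.le), inv_mul_eq_div,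
    div_lt_iff₀ ht]
  rw [div_lt_iff₀ hε] at hk
  nlinarith

end RadstromCancellation

section Lattice

variable {d m : ℕ}

lemma pairing_add (n : Fin d → ℤ) (x y : Fin d → ℝ) :
    pairing n (x + y) = pairing n x + pairing n y := by
  simp only [pairing, Pi.add_apply, mul_add, Finset.sum_add_distrib]

lemma pairing_smul (n : Fin d → ℤ) (c : ℝ) (x : Fin d → ℝ) :
    pairing n (c • x) = c * pairing n x := by
  simp only [pairing, Pi.smul_apply, smul_eq_mul, Finset.mul_sum]
  exact Finset.sum_congr rfl fun i _ => by ring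

lemma isLinearMap_pairing (n : Fin d → ℤ) : IsLinearMap ℝ (pairing n) :=
  ⟨pairing_add n, pairing_smul n⟩

lemma pairing_surjective {n : Fin d → ℤ} (hn : n ≠ 0) : Function.Surjective (pairing n) := by
  obtain ⟨j, hj⟩ := Function.ne_iff.mp hn
  intro t
  refine ⟨Pi.single j (t / n j), ?_⟩
  have hj' : (n j : ℝ) ≠ 0 := by exact_mod_cast hj
  simp [pairing, Pi.single_apply, mul_div_cancel₀ _ hj']

lemma pairing_gt_of_mem_interior {n : Fin d → ℤ} (hn : n ≠ 0) {c : ℝ} {y : Fin d → ℝ}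
    (hy : y ∈ interior {x | pairing n x ≥ c}) : pairing n y > c := by
  let f : (Fin d → ℝ) →L[ℝ] ℝ :=
    LinearMap.toContinuousLinearMap (IsLinearMap.mk' _ (isLinearMap_pairing n))
  have hf : IsOpenMap f := f.isOpenMap (pairing_surjective hn)
  have : y ∈ f ⁻¹' interior (Ici c) := by
    rwa [hf.preimage_interior_eq_interior_preimage f.continuous]
  simpa [f] using this

lemma convex_setOf_pairing_ge (n : Fin m → Fin d → ℤ) (c : Fin m → ℝ) :
    Convex ℝ {x : Fin d → ℝ | ∀ i, pairing (n i) x ≥ c i} := by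
  simp only [ofPred_forall]
  exact convex_iInter fun i => convex_halfSpace_ge (isLinearMap_pairing (n i)) (c i)

lemma smul_setOf_pairing_ge (n : Fin m → Fin d → ℤ) (c : Fin m → ℝ) {t : ℝ} (ht : 0 < t) :
    t • {x : Fin d → ℝ | ∀ i, pairing (n i) x ≥ c i} =
      {x | ∀ i, pairing (n i) x ≥ t * c i} := by
  ext x
  simp only [mem_smul_set_iff_inv_smul_mem₀ ht.ne', mem_ofPred_eq, pairing_smul, ge_iff_le,
    le_inv_mul_iff₀ ht]

lemma add_mem_latticePoints {x y : Fin d → ℝ} (hx : x ∈ latticePoints d)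
    (hy : y ∈ latticePoints d) : x + y ∈ latticePoints d := by
  intro i
  obtain ⟨z, hz⟩ := hx i
  obtain ⟨w, hw⟩ := hy i
  exact ⟨z + w, by simp [hz, hw]⟩

lemma natCast_smul_mem_latticePoints (k : ℕ) {x : Fin d → ℝ} (hx : x ∈ latticePoints d) :
    (k : ℝ) • x ∈ latticePoints d := by
  intro i
  obtain ⟨z, hz⟩ := hx i
  exact ⟨k * z, by simp [hz]⟩

lemma exists_pairing_eq_intCast (n : Fin d → ℤ) {x : Fin d → ℝ} (hx : x ∈ latticePoints d) :
    ∃ z : ℤ, pairing n x = z := by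
  choose f hf using hx
  exact ⟨∑ i, n i * f i, by simp [pairing, hf]⟩

lemma pairing_ge_add_one_of_mem_interior {n : Fin d → ℤ} (hn : n ≠ 0) {c : ℤ}
    {y : Fin d → ℝ} (hy : y ∈ interior {x | pairing n x ≥ c}) (hyl : y ∈ latticePoints d) :
    pairing n y ≥ c + 1 := by
  obtain ⟨z, hz⟩ := exists_pairing_eq_intCast n hyl
  have hgt := pairing_gt_of_mem_interior hn hy
  rw [hz] at hgt ⊢
  exact_mod_cast Int.add_one_le_iff.mpr (by exact_mod_cast hgt)

lemma finite_of_subset_latticePoints {S : Set (Fin d → ℝ)} (hS : S ⊆ latticePoints d)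
    (hb : Bornology.IsBounded S) : S.Finite := by
  obtain ⟨M, hM⟩ := isBounded_iff_forall_norm_le.mp hb
  have hbox : (Set.pi univ fun _ : Fin d => Icc (-⌈M⌉) ⌈M⌉).Finite :=
    Finite.pi fun _ => finite_Icc _ _
  refine (hbox.image fun z i => (z i : ℝ)).subset ?_
  intro x hx
  choose z hz using hS hx
  refine ⟨z, fun i _ => ?_, funext fun i => (hz i).symm⟩
  have : |(z i : ℝ)| ≤ ⌈M⌉ := by
    rw [← hz i]
    exact ((norm_le_pi_norm x i).trans (hM x hx)).trans (Int.le_ceil M)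
  exact abs_le.mp (by exact_mod_cast this)

lemma isCompact_convexHull_of_subset_latticePoints {S : Set (Fin d → ℝ)}
    (hS : S ⊆ latticePoints d) (hb : Bornology.IsBounded S) : IsCompact (convexHull ℝ S) :=
  (finite_of_subset_latticePoints hS hb).isCompact_convexHull (𝕜 := ℝ)

end Lattice

section Polytope

variable {d m : ℕ}

lemma IsLatticePolytope.isCompact {P : Set (Fin d → ℝ)} (hP : IsLatticePolytope P) :
    IsCompact P := by
  obtain ⟨V, -, rfl⟩ := hP
  exact V.finite_toSet.isCompact_convexHull (𝕜 := ℝ)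

lemma floorPoly_subset {R : Set (Fin d → ℝ)} (hR : Convex ℝ R) : floorPoly R ⊆ R :=
  convexHull_min (fun _ hy => interior_subset hy.1) hR

lemma IsFacetPresentation.normal_ne_zero {P : Set (Fin d → ℝ)} {n : Fin m → Fin d → ℤ}
    {h : Fin m → ℤ} (hpres : IsFacetPresentation P n h) (i : Fin m) : n i ≠ 0 := fun hi =>
  one_ne_zero ((hpres.2.1 i).symm.trans (Finset.gcd_eq_zero_iff.mpr fun j _ => by simp [hi]))

lemma IsFacetPresentation.natCast_smul_eq {P : Set (Fin d → ℝ)} {n : Fin m → Fin d → ℤ}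
    {h : Fin m → ℤ} (hpres : IsFacetPresentation P n h) {a : ℕ} (ha : 1 ≤ a) :
    (a : ℝ) • P = {x | ∀ i, pairing (n i) x ≥ ((-(a * h i) : ℤ) : ℝ)} := by
  rw [hpres.1, smul_setOf_pairing_ge n _ (by positivity)]
  push_cast
  simp only [mul_neg]

lemma Convex.natCast_smul_eq_add_of_eq_add {P F Q : Set (Fin d → ℝ)} (hP : Convex ℝ P)
    (hdecomp : P = F + Q) {a : ℕ} (ha : 1 ≤ a) :
    (a : ℝ) • P = F + (((a - 1 : ℕ) : ℝ) • P + Q) := by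
  have hsplit : (a : ℝ) • P = ((a - 1 : ℕ) : ℝ) • P + P := by
    convert hP.add_smul (Nat.cast_nonneg (a - 1)) zero_le_one using 2
    · rw [Nat.cast_sub ha, Nat.cast_one, sub_add_cancel]
    · rw [one_smul]
  conv_lhs => rw [hsplit]
  nth_rewrite 2 [hdecomp]
  exact add_left_comm _ _ _

lemma floorPoly_add_convexHull_subset {n : Fin m → Fin d → ℤ} (hn : ∀ i, n i ≠ 0)
    (c : Fin m → ℤ) :
    floorPoly {x | ∀ i, pairing (n i) x ≥ c i} +
        convexHull ℝ {x | x ∈ latticePoints d ∧ ∀ i, pairing (n i) x ≥ -1} ⊆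
      {x | ∀ i, pairing (n i) x ≥ c i} := by
  rw [floorPoly, ← convexHull_add]
  refine convexHull_min ?_ (convex_setOf_pairing_ge n _)
  rintro _ ⟨y, ⟨hy, hyl⟩, t, ⟨-, ht⟩, rfl⟩ i
  have hsub : {x | ∀ j, pairing (n j) x ≥ c j} ⊆ {x | pairing (n i) x ≥ c i} := fun _ hx => hx i
  have hyi := pairing_ge_add_one_of_mem_interior (hn i) (interior_mono hsub hy) hyl
  simp only [pairing_add]
  linarith [ht i]

lemma natCast_sub_one_smul_add_remPoly_subset {P : Set (Fin d → ℝ)} (hP : IsLatticePolytope P)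
    {n : Fin m → Fin d → ℤ} {h : Fin m → ℤ}
    (hPsub : P ⊆ {x | ∀ i, pairing (n i) x ≥ -(h i : ℝ)}) {a : ℕ} (ha : 1 ≤ a) :
    ((a - 1 : ℕ) : ℝ) • P + remPoly n h a ⊆
      convexHull ℝ {x | x ∈ latticePoints d ∧ ∀ i, pairing (n i) x ≥ -1} := by
  obtain ⟨V, hVl, rfl⟩ := hP
  rw [remPoly, ← convexHull_smul, ← convexHull_add]
  refine convexHull_mono ?_
  rintro _ ⟨_, ⟨v, hv, rfl⟩, s, ⟨hsl, hs⟩, rfl⟩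
  refine ⟨add_mem_latticePoints (natCast_smul_mem_latticePoints _ (hVl hv)) hsl, fun i => ?_⟩
  rw [pairing_add, pairing_smul, Nat.cast_sub ha, Nat.cast_one]
  have hvi : ((a : ℝ) - 1) * -(h i : ℝ) ≤ ((a : ℝ) - 1) * pairing (n i) v :=
    mul_le_mul_of_nonneg_left (hPsub (subset_convexHull ℝ _ hv) i)
      (sub_nonneg.2 (by exact_mod_cast ha))
  linarith [hs i]

lemma isCompact_convexHull_of_eq_add {P F S : Set (Fin d → ℝ)} (hP : Bornology.IsBounded P)
    (hdecomp : P = F + convexHull ℝ S) (hF : F.Nonempty) (hS : S ⊆ latticePoints d) :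
    IsCompact (convexHull ℝ S) := by
  obtain ⟨p₀, hp₀⟩ := hF
  have hsub : convexHull ℝ S ⊆ -p₀ +ᵥ P := fun s hs =>
    ⟨p₀ + s, hdecomp ▸ add_mem_add hp₀ hs, by simp⟩
  exact isCompact_convexHull_of_subset_latticePoints hS
    ((hP.vadd _).subset ((subset_convexHull ℝ _).trans hsub))

end Polytope

theorem stmt_9_general {d : ℕ} (P : Set (Fin d → ℝ))
    (hP : IsLatticePolytope P)
    {m : ℕ} (n : Fin m → Fin d → ℤ) (h : Fin m → ℤ)
    (hpres : IsFacetPresentation P n h)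
    (a : ℕ) (ha : IsCodegree P a)
    (hdecomp : P = floorPoly ((a : ℝ) • P) + remPoly n h a) :
    (a : ℝ) • P = floorPoly ((a : ℝ) • P) +
        convexHull ℝ {x | x ∈ latticePoints d ∧ ∀ i, pairing (n i) x ≥ -1} ∧
    convexHull ℝ {x | x ∈ latticePoints d ∧ ∀ i, pairing (n i) x ≥ -1} =
      ((a - 1 : ℕ) : ℝ) • P + remPoly n h a := by
  obtain ⟨ha1, hint, -⟩ := ha
  have hPconv : Convex ℝ P := hpres.1 ▸ convex_setOf_pairing_ge n _
  have hPcpt : IsCompact P := hP.isCompact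
  set R := convexHull ℝ {x | x ∈ latticePoints d ∧ ∀ i, pairing (n i) x ≥ -1}
  set B := ((a - 1 : ℕ) : ℝ) • P + remPoly n h a
  have hsplit : (a : ℝ) • P = floorPoly ((a : ℝ) • P) + B :=
    hPconv.natCast_smul_eq_add_of_eq_add hdecomp ha1
  have hBR : B ⊆ R := natCast_sub_one_smul_add_remPoly_subset hP hpres.1.subset ha1
  have hFR : floorPoly ((a : ℝ) • P) + R ⊆ (a : ℝ) • P := by
    rw [hpres.natCast_smul_eq ha1]
    exact floorPoly_add_convexHull_subset hpres.normal_ne_zero _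
  have h1 : (a : ℝ) • P = floorPoly ((a : ℝ) • P) + R :=
    (hsplit.trans_subset (add_subset_add_left hBR)).antisymm hFR
  refine ⟨h1, ?_⟩
  have hF : (floorPoly ((a : ℝ) • P)).Nonempty := hint.mono (subset_convexHull ℝ _)
  have hFb : Bornology.IsBounded (floorPoly ((a : ℝ) • P)) :=
    (hPcpt.smul (a : ℝ)).isBounded.subset (floorPoly_subset (hPconv.smul _))
  have hBcpt : IsCompact B := (hPcpt.smul _).add <|
    isCompact_convexHull_of_eq_add hPcpt.isBounded hdecomp hF fun _ hs => hs.1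
  have hBconv : Convex ℝ B := (hPconv.smul _).add (convex_convexHull ℝ _)
  refine (hBconv.subset_of_add_subset_add_right hBcpt.isClosed hF hFb ?_).antisymm hBR
  rw [add_comm R, add_comm B, ← h1, ← hsplit]

theorem stmt_9 {d : ℕ} (hd : 1 ≤ d) (P : Set (Fin d → ℝ))
    (hP : IsLatticePolytope P) (hfull : (interior P).Nonempty)
    {m : ℕ} (n : Fin m → Fin d → ℤ) (h : Fin m → ℤ)
    (hpres : IsFacetPresentation P n h)
    (a : ℕ) (ha : IsCodegree P a)
    (hdecomp : P = floorPoly ((a : ℝ) • P) + remPoly n h a) :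
    (a : ℝ) • P = floorPoly ((a : ℝ) • P) +
        convexHull ℝ {x | x ∈ latticePoints d ∧ ∀ i, pairing (n i) x ≥ -1} ∧
    convexHull ℝ {x | x ∈ latticePoints d ∧ ∀ i, pairing (n i) x ≥ -1} =
      ((a - 1 : ℕ) : ℝ) • P + remPoly n h a :=
  stmt_9_general P hP n h hpres a ha hdecomp
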